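/- arXiv:2506.14207 — 4 statements merged into one kernel-verified Lean document; each statement's English description precedes it below -/
import Mathlib

section
/- Let q = p^f with f odd (f > 1) and x ∈ 𝔽_q \ 𝔽_p. Then the stabilizer in GL₂(𝔽_p) of the point [1:x] ∈ ℙ¹(𝔽_q) equals the center Z_p of GL₂(𝔽_p) (the scalar matrices). -/
open Matrix Projectivization

/-- The natural action of `GL₂` over a field on the projective line over that field. -/
noncomputable instance glProjAct {K : Type*} [Field K] :
    MulAction (GL (Fin 2) K) (Projectivization K (Fin 2 → K)) where
  smul g x := x.map (Matrix.mulVecLin (g : Matrix (Fin 2) (Fin 2) K))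
      (fun v w h => (Matrix.GeneralLinearGroup.toLin g).toLinearEquiv.injective (by simpa using h))
  one_smul x := by
    induction x using Projectivization.ind with
    | h v hv =>
      show Projectivization.map _ _ _ = _
      erw [Projectivization.map_mk]
      simp [Matrix.mulVecLin_apply]
  mul_smul g h x := by
    induction x using Projectivization.ind with
    | h v hv =>
      show Projectivization.map _ _ _ = Projectivization.map _ _ (Projectivization.map _ _ _)
      erw [Projectivization.map_mk, Projectivization.map_mk]
      simp [Matrix.mulVecLin_apply, Matrix.mulVec_mulVec]

/-- The action of `GL₂(F)` on the projective line over an extension `L` of `F`,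
via matrix multiplication on homogeneous coordinates (entries of the matrix being
mapped into `L` by the algebra map). -/
noncomputable instance glProjActOf {F L : Type*} [Field F] [Field L] [Algebra F L] :
    MulAction (GL (Fin 2) F) (Projectivization L (Fin 2 → L)) :=
  MulAction.compHom _ (Matrix.GeneralLinearGroup.map (n := Fin 2) (algebraMap F L))

/-! A matrix `[[a, b], [c, d]]` fixes `[1 : x]` iff `(1, x)` is an eigenvector of it, i.e. iff
`b x² + (a - d) x - c = 0`. Since `[𝔽_q : 𝔽_p] = f` is odd, the degree of `x` over `𝔽_p` is an
odd divisor of `f`, and it is not `1` because `x ∉ 𝔽_p`; so it is at least `3` and the quadratic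
relation must be trivial: `b = c = 0` and `a = d`. -/

section OddDegree

open Polynomial Module

variable {K L : Type*} [Field K] [Field L] [Algebra K L] [FiniteDimensional K L]

theorem three_le_natDegree_minpoly_of_odd_finrank (hodd : Odd (finrank K L)) {x : L}
    (hx : x ∉ Set.range (algebraMap K L)) : 3 ≤ (minpoly K x).natDegree := by
  have hint : IsIntegral K x := .of_finite K x
  have hdeg_odd : Odd (minpoly K x).natDegree := hodd.of_dvd_nat (minpoly.degree_dvd hint)
  have hdeg_ne_one : (minpoly K x).natDegree ≠ 1 := fun h =>
    hx (minpoly.natDegree_eq_one_iff.mp h)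
  obtain ⟨k, hk⟩ := hdeg_odd
  omega

theorem quadratic_eq_zero_iff_of_odd_finrank (hodd : Odd (finrank K L)) {x : L}
    (hx : x ∉ Set.range (algebraMap K L)) (a b c : K) :
    algebraMap K L a * x ^ 2 + algebraMap K L b * x + algebraMap K L c = 0 ↔
      a = 0 ∧ b = 0 ∧ c = 0 := by
  refine ⟨fun h => ?_, fun ⟨ha, hb, hc⟩ => by simp [ha, hb, hc]⟩
  set P : K[X] := C a * X ^ 2 + C b * X + C c
  have hP : aeval x P = 0 := by simpa [P] using h
  have hP0 : P = 0 := by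
    by_contra hne
    have hle := minpoly.degree_le_of_ne_zero K x hne hP
    have h3 := three_le_natDegree_minpoly_of_odd_finrank hodd hx
    have hP2 : P.natDegree ≤ 2 := by unfold P; compute_degree
    have := natDegree_le_natDegree hle
    omega
  refine ⟨?_, ?_, ?_⟩
  · simpa [P] using congrArg (coeff · 2) hP0
  · simpa [P] using congrArg (coeff · 1) hP0
  · simpa [P] using congrArg (coeff · 0) hP0

end OddDegree

section ProjectiveLine

variable {F L : Type*} [Field F] [Field L] [Algebra F L]

theorem mem_stabilizer_mk_iff_exists_mulVec_eq_smul (g : GL (Fin 2) F) (v : Fin 2 → L)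
    (hv : v ≠ 0) :
    g ∈ MulAction.stabilizer (GL (Fin 2) F) (mk L v hv) ↔
      ∃ t : L, (g : Matrix (Fin 2) (Fin 2) F).map (algebraMap F L) *ᵥ v = t • v := by
  rw [MulAction.mem_stabilizer_iff]
  change Projectivization.map _ ?_ (mk L v hv) = _ ↔ _
  · erw [Projectivization.map_mk, mk_eq_mk_iff']
    exact exists_congr fun t => eq_comm
  · exact mulVec_injective_iff_isUnit.mpr (Units.isUnit _)

theorem exists_mulVec_eq_smul_iff (M : Matrix (Fin 2) (Fin 2) L) (x : L) :
    (∃ t : L, M *ᵥ ![1, x] = t • ![1, x]) ↔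
      M 0 1 * x ^ 2 + (M 0 0 - M 1 1) * x - M 1 0 = 0 := by
  simp only [funext_iff, Fin.forall_fin_two, mulVec, dotProduct, Fin.sum_univ_two, cons_val_zero,
    cons_val_one, cons_val_fin_one, mul_one, Pi.smul_apply, smul_eq_mul, exists_eq_left']
  constructor <;> intro h <;> linear_combination -h

end ProjectiveLine

/-- Let `q = p^f` with `f` odd, `f > 1`, and `x ∈ 𝔽_q \ 𝔽_p`.  Then the stabilizer in
`GL₂(𝔽_p)` of the point `[1:x] ∈ ℙ¹(𝔽_q)` is the center of `GL₂(𝔽_p)`, i.e. the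
scalar matrices. -/
theorem stabilizer_in_GL2p_eq_center_odd (p f : ℕ) [Fact p.Prime] (hf1 : Odd f)
    (x : GaloisField p f) (hx : x ∉ Set.range (algebraMap (ZMod p) (GaloisField p f))) :
    ∀ g : GL (Fin 2) (ZMod p),
      g ∈ MulAction.stabilizer (GL (Fin 2) (ZMod p))
          (Projectivization.mk (GaloisField p f) (![1, x] : Fin 2 → GaloisField p f)
            (by intro h; simpa using congrFun h 0)) ↔
      ((g : Matrix (Fin 2) (Fin 2) (ZMod p)) 0 1 = 0 ∧
        (g : Matrix (Fin 2) (Fin 2) (ZMod p)) 1 0 = 0 ∧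
        (g : Matrix (Fin 2) (Fin 2) (ZMod p)) 0 0 = (g : Matrix (Fin 2) (Fin 2) (ZMod p)) 1 1) := by
  intro g
  have hodd : Odd (Module.finrank (ZMod p) (GaloisField p f)) := by
    rwa [GaloisField.finrank p hf1.pos.ne']
  set φ := algebraMap (ZMod p) (GaloisField p f)
  set A := (g : Matrix (Fin 2) (Fin 2) (ZMod p))
  have hquad : A.map φ 0 1 * x ^ 2 + (A.map φ 0 0 - A.map φ 1 1) * x - A.map φ 1 0 =
      φ (A 0 1) * x ^ 2 + φ (A 0 0 - A 1 1) * x + φ (-A 1 0) := by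
    simp only [map_apply, map_sub, map_neg]
    ring
  rw [mem_stabilizer_mk_iff_exists_mulVec_eq_smul, exists_mulVec_eq_smul_iff, hquad,
    quadratic_eq_zero_iff_of_odd_finrank hodd hx, sub_eq_zero, neg_eq_zero]
  tauto
end

section
/- Let q = p^f with f even and x ∈ 𝔽_q not in the subfield 𝔽_{p²}. Then the stabilizer in GL₂(𝔽_p) of [1:x] ∈ ℙ¹(𝔽_q) equals the center Z_p of GL₂(𝔽_p). -/
/-! A matrix `[[a, b], [c, d]]` fixes `[1 : x]` exactly when `b x² + (a - d) x - c = 0`. The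
coefficients lie in `𝔽_p`, so they are fixed by the Frobenius `σ`; comparing the equation with its
`σ`-conjugate twice and using `σ (σ x) ≠ x`, i.e. `x ∉ 𝔽_{p²}`, forces `b = c = 0` and `a = d`. -/

open Matrix Projectivization

theorem eq_zero_of_quadratic_eq_zero_of_apply_apply_ne {L : Type*} [Field L] (σ : L →+* L)
    {a b c x : L} (ha : σ a = a) (hb : σ b = b) (hc : σ c = c) (hx : σ (σ x) ≠ x)
    (h : a * x ^ 2 + b * x + c = 0) : a = 0 ∧ b = 0 ∧ c = 0 := by
  have hσx : x - σ x ≠ 0 := sub_ne_zero.2 fun h => hx (by rw [← h, ← h])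
  have hσh : a * σ x ^ 2 + b * σ x + c = 0 := by simpa [ha, hb, hc] using congrArg σ h
  have hfactor : (x - σ x) * (a * (x + σ x) + b) = 0 := by linear_combination h - hσh
  have hlin : a * (x + σ x) + b = 0 := (mul_eq_zero.1 hfactor).resolve_left hσx
  have hσlin : a * (σ x + σ (σ x)) + b = 0 := by simpa [ha, hb] using congrArg σ hlin
  have ha0 : a = 0 :=
    (mul_eq_zero.1 (by linear_combination hlin - hσlin : a * (x - σ (σ x)) = 0)).resolve_right
      (sub_ne_zero.2 hx.symm)
  subst ha0
  have hb0 : b = 0 := by simpa using hlin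
  subst hb0
  exact ⟨rfl, rfl, by simpa using h⟩

theorem Matrix.GeneralLinearGroup.mulVec_ne_zero {n R : Type*} [Fintype n] [DecidableEq n]
    [Semiring R] (g : GL n R) {v : n → R} (hv : v ≠ 0) : (g : Matrix n n R) *ᵥ v ≠ 0 :=
  fun h => hv <| mulVec_injective_of_isUnit g.isUnit (h.trans (mulVec_zero _).symm)

theorem glProjActOf_smul_mk {F L : Type*} [Field F] [Field L] [Algebra F L] (g : GL (Fin 2) F)
    {v : Fin 2 → L} (hv : v ≠ 0) :
    g • Projectivization.mk L v hv =
      Projectivization.mk L ((g.map (algebraMap F L) : Matrix (Fin 2) (Fin 2) L) *ᵥ v)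
        ((g.map (algebraMap F L)).mulVec_ne_zero hv) :=
  Projectivization.map_mk _ (mulVec_injective_of_isUnit (Units.isUnit _)) v hv

theorem Projectivization.mk_eq_mk_one_iff {K : Type*} [Field K] {w : Fin 2 → K} (hw : w ≠ 0)
    {x : K} (h : (![1, x] : Fin 2 → K) ≠ 0) :
    Projectivization.mk K w hw = Projectivization.mk K ![1, x] h ↔ w 1 = x * w 0 := by
  rw [Projectivization.mk_eq_mk_iff]
  constructor
  · rintro ⟨u, rfl⟩
    simp
  · intro h1
    have hw0 : w 0 ≠ 0 := fun h0 => hw (by ext i; fin_cases i <;> simp [h0, h1])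
    refine ⟨Units.mk0 (w 0) hw0, ?_⟩
    ext i; fin_cases i <;> simp [h1, mul_comm]

theorem glProjActOf_mem_stabilizer_mk_one_iff {F L : Type*} [Field F] [Field L] [Algebra F L]
    (g : GL (Fin 2) F) {x : L} (h : (![1, x] : Fin 2 → L) ≠ 0) :
    g ∈ MulAction.stabilizer (GL (Fin 2) F) (Projectivization.mk L ![1, x] h) ↔
      algebraMap F L (g 1 0) + algebraMap F L (g 1 1) * x =
        x * (algebraMap F L (g 0 0) + algebraMap F L (g 0 1) * x) := by
  rw [MulAction.mem_stabilizer_iff, glProjActOf_smul_mk, Projectivization.mk_eq_mk_one_iff]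
  simp [Matrix.mulVec, dotProduct, Fin.sum_univ_two]

/-- Let `q = p^f` with `f` even, and `x ∈ 𝔽_q` not in the subfield `𝔽_{p²}`
(equivalently `x^(p²) ≠ x`).  Then the stabilizer in `GL₂(𝔽_p)` of `[1:x] ∈ ℙ¹(𝔽_q)`
is the center of `GL₂(𝔽_p)`, i.e. the scalar matrices. -/
theorem stabilizer_in_GL2p_eq_center_even (p f : ℕ) [Fact p.Prime]
    (x : GaloisField p f) (hx : x ^ p ^ 2 ≠ x) :
    ∀ g : GL (Fin 2) (ZMod p),
      g ∈ MulAction.stabilizer (GL (Fin 2) (ZMod p))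
          (Projectivization.mk (GaloisField p f) (![1, x] : Fin 2 → GaloisField p f)
            (by intro h; simpa using congrFun h 0)) ↔
      ((g : Matrix (Fin 2) (Fin 2) (ZMod p)) 0 1 = 0 ∧
        (g : Matrix (Fin 2) (Fin 2) (ZMod p)) 1 0 = 0 ∧
        (g : Matrix (Fin 2) (Fin 2) (ZMod p)) 0 0 = (g : Matrix (Fin 2) (Fin 2) (ZMod p)) 1 1) := by
  intro g
  set φ := algebraMap (ZMod p) (GaloisField p f)
  set σ := frobenius (GaloisField p f) p
  have hσφ (t : ZMod p) : σ (φ t) = φ t := RingHom.congr_fun (Subsingleton.elim (σ.comp φ) φ) t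
  have hσx : σ (σ x) ≠ x := by simpa [σ, frobenius_def, ← pow_mul, sq] using hx
  rw [glProjActOf_mem_stabilizer_mk_one_iff]
  constructor
  · intro h
    obtain ⟨hb, had, hc⟩ := eq_zero_of_quadratic_eq_zero_of_apply_apply_ne σ (hσφ (g 0 1))
      (hσφ (g 0 0 - g 1 1)) (hσφ (-g 1 0)) hσx (by rw [map_sub, map_neg]; linear_combination -h)
    exact ⟨φ.injective (by simpa using hb), φ.injective (by simpa using hc),
      sub_eq_zero.1 (φ.injective (by simpa using had))⟩
  · rintro ⟨hb, hc, had⟩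
    simp [hb, hc, had, mul_comm]
end

section
/- Let q = p^f with f odd, f > 1. The number of GL₂(𝔽_p)-orbits on ℙ¹(𝔽_q) \ ℙ¹(𝔽_p) is (p^{f−1} − 1)/(p² − 1), and every such orbit has cardinality p(p² − 1). -/
/-!
A point of `ℙ¹(𝔽_q)` off `ℙ¹(𝔽_p)` is `[x : 1]` with `x ∉ 𝔽_p`. The degree of `x` over
`𝔽_p` divides the odd number `f` and is not `1`, so it is at least `3`. If
`g = (a b; c d) ∈ GL₂(𝔽_p)` fixes `[x : 1]`, then `x` is a root of `c X² + (d - a) X - b`,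
so `g` is scalar: the stabilizer is the centre, of order `p - 1`, and every orbit has
`|GL₂(𝔽_p)| / (p - 1) = p (p² - 1)` points. The `q - p` points off `ℙ¹(𝔽_p)` therefore fall
into `(q - p) / (p (p² - 1))` orbits.
-/

open Matrix Projectivization

section orbits

variable {G α : Type*} [Group G] [MulAction G α]

variable (G) in
def orbitsIn (S : Set α) : Set (Set α) := {O | ∃ x ∈ S, O = MulAction.orbit G x}

lemma card_orbitsIn_mul_eq_card [Finite α] {S : Set α}
    (hS : ∀ g : G, ∀ x ∈ S, g • x ∈ S) {c : ℕ}
    (hc : ∀ x ∈ S, Nat.card (MulAction.orbit G x) = c) :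
    Nat.card (orbitsIn G S) * c = Nat.card S := by
  have : Fintype (orbitsIn G S) := Fintype.ofFinite _
  let π : S → orbitsIn G S := fun x => ⟨MulAction.orbit G x, x, x.2, rfl⟩
  have card_fiber : ∀ O, Nat.card {x // π x = O} = c := by
    rintro ⟨O, y, hy, rfl⟩
    have hsub : ∀ {z}, z ∈ MulAction.orbit G y → z ∈ S := by
      rintro _ ⟨g, rfl⟩
      exact hS g y hy
    rw [← hc y hy, ← Nat.card_congr (Equiv.subtypeSubtypeEquivSubtype hsub)]
    exact Nat.card_congr (Equiv.subtypeEquivRight fun x => by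
      simp [π, Subtype.ext_iff, MulAction.orbit_eq_iff])
  rw [← Nat.card_congr (Equiv.sigmaFiberEquiv π), Nat.card_sigma,
    Finset.sum_congr rfl fun O _ => card_fiber O, Finset.sum_const, Finset.card_univ, smul_eq_mul,
    Nat.card_eq_fintype_card]

end orbits

section ProjectiveLine

open Polynomial
open scoped LinearAlgebra.Projectivization

variable {F L : Type*} [Field F] [Field L] [Algebra F L]

lemma map_mulVec_ne_zero {n : Type*} [Fintype n] [DecidableEq n] (g : GL n F) {v : n → L}
    (hv : v ≠ 0) : (g : Matrix n n F).map (algebraMap F L) *ᵥ v ≠ 0 := fun h =>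
  hv (mulVec_injective_of_isUnit (GeneralLinearGroup.map (algebraMap F L) g).isUnit
    (h.trans (mulVec_zero _).symm))

lemma smul_mk_eq_mk_map_mulVec (g : GL (Fin 2) F) (v : Fin 2 → L) (hv : v ≠ 0) :
    g • mk L v hv = mk L ((g : Matrix (Fin 2) (Fin 2) F).map (algebraMap F L) *ᵥ v)
      (map_mulVec_ne_zero g hv) :=
  rfl

lemma scalar_smul (u : Fˣ) (P : ℙ L (Fin 2 → L)) :
    GeneralLinearGroup.scalar (Fin 2) u • P = P := by
  induction P using Projectivization.ind with
  | h v hv =>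
    rw [smul_mk_eq_mk_map_mulVec, mk_eq_mk_iff']
    refine ⟨algebraMap F L u, ?_⟩
    simp [scalar_apply, diagonal_map]

variable (F L) in
def rationalPoints : Set (ℙ L (Fin 2 → L)) :=
  {P | ∃ (a b : F) (h : (![algebraMap F L a, algebraMap F L b] : Fin 2 → L) ≠ 0),
    P = mk L _ h}

lemma smul_mem_rationalPoints (g : GL (Fin 2) F) {P : ℙ L (Fin 2 → L)}
    (hP : P ∈ rationalPoints F L) : g • P ∈ rationalPoints F L := by
  obtain ⟨a, b, hab, rfl⟩ := hP
  set w := (g : Matrix (Fin 2) (Fin 2) F) *ᵥ ![a, b]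
  have hw : (g : Matrix (Fin 2) (Fin 2) F).map (algebraMap F L) *ᵥ
      ![algebraMap F L a, algebraMap F L b] = ![algebraMap F L (w 0), algebraMap F L (w 1)] := by
    ext i; fin_cases i <;> simp [w]
  rw [smul_mk_eq_mk_map_mulVec]
  exact ⟨w 0, w 1, hw ▸ map_mulVec_ne_zero g hab, by congr 1⟩

lemma smul_mem_rationalPoints_iff (g : GL (Fin 2) F) (P : ℙ L (Fin 2 → L)) :
    g • P ∈ rationalPoints F L ↔ P ∈ rationalPoints F L :=
  ⟨fun h => inv_smul_smul g P ▸ smul_mem_rationalPoints g⁻¹ h, smul_mem_rationalPoints g⟩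

variable (L) in
def affinePoint (x : L) : ℙ L (Fin 2 → L) := mk L ![x, 1] (by simp)

variable (L) in
def pointAtInfinity : ℙ L (Fin 2 → L) := mk L ![1, 0] (by simp)

lemma eq_pointAtInfinity_or_exists_eq_affinePoint (P : ℙ L (Fin 2 → L)) :
    P = pointAtInfinity L ∨ ∃ x, P = affinePoint L x := by
  induction P using Projectivization.ind with
  | h v hv =>
    by_cases h1 : v 1 = 0
    · have h0 : v 0 ≠ 0 := fun h0 => hv (by ext i; fin_cases i <;> assumption)
      exact .inl ((mk_eq_mk_iff' _ _ _ _ _).2 ⟨v 0, by ext i; fin_cases i <;> simp [h1]⟩)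
    · exact .inr ⟨v 0 / v 1, (mk_eq_mk_iff' _ _ _ _ _).2 ⟨v 1, by
        ext i; fin_cases i <;> simp [mul_div_cancel₀ _ h1]⟩⟩

lemma affinePoint_injective : Function.Injective (affinePoint L) := by
  intro x y h
  obtain ⟨c, hc⟩ := (mk_eq_mk_iff' _ _ _ _ _).1 h
  have h1 := congrFun hc 1
  have h0 := congrFun hc 0
  simp_all

lemma pointAtInfinity_mem_rationalPoints : pointAtInfinity L ∈ rationalPoints F L :=
  ⟨1, 0, by simp, by simp [pointAtInfinity]⟩

lemma affinePoint_mem_rationalPoints_iff {x : L} :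
    affinePoint L x ∈ rationalPoints F L ↔ x ∈ Set.range (algebraMap F L) := by
  constructor
  · rintro ⟨a, b, hab, h⟩
    obtain ⟨c, hc⟩ := (mk_eq_mk_iff' _ _ _ _ _).1 h
    have h0 := congrFun hc 0
    have h1 := congrFun hc 1
    simp only [Pi.smul_apply, smul_eq_mul, cons_val_zero, cons_val_one] at h0 h1
    refine ⟨a / b, ?_⟩
    rw [map_div₀, div_eq_iff (right_ne_zero_of_mul_eq_one h1)]
    linear_combination algebraMap F L b * h0 - algebraMap F L a * h1
  · rintro ⟨a, rfl⟩
    exact ⟨a, 1, by simp, by simp [affinePoint]⟩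

lemma compl_rationalPoints_eq_image :
    (rationalPoints F L)ᶜ = affinePoint L '' (Set.range (algebraMap F L))ᶜ := by
  ext P
  rcases eq_pointAtInfinity_or_exists_eq_affinePoint P with rfl | ⟨x, rfl⟩
  · refine iff_of_false (not_not_intro pointAtInfinity_mem_rationalPoints) ?_
    rintro ⟨x, hx, h⟩
    exact hx (affinePoint_mem_rationalPoints_iff.1 (h ▸ pointAtInfinity_mem_rationalPoints))
  · rw [Set.mem_compl_iff, affinePoint_mem_rationalPoints_iff,
      affinePoint_injective.mem_set_image]
    rfl

lemma card_compl_rationalPoints [Finite L] :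
    Nat.card ↥(rationalPoints F L)ᶜ = Nat.card L - Nat.card F := by
  rw [Nat.card_coe_set_eq, compl_rationalPoints_eq_image,
    Set.ncard_image_of_injective _ affinePoint_injective, Set.ncard_compl,
    Set.ncard_range_of_injective (algebraMap F L).injective]

lemma eq_zero_of_aeval_eq_zero_of_natDegree_lt {x : L} {q : F[X]}
    (hq : q.natDegree < (minpoly F x).natDegree) (h : aeval x q = 0) : q = 0 := by
  by_contra hq0
  exact hq.not_ge (natDegree_le_natDegree (minpoly.degree_le_of_ne_zero F x hq0 h))

lemma two_lt_natDegree_minpoly [FiniteDimensional F L] (hL : Odd (Module.finrank F L)) {x : L}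
    (hx : x ∉ Set.range (algebraMap F L)) : 2 < (minpoly F x).natDegree := by
  have hdvd := minpoly.degree_dvd (IsIntegral.of_finite F x)
  have h1 : (minpoly F x).natDegree ≠ 1 := mt minpoly.natDegree_eq_one_iff.1 hx
  have h2 : (minpoly F x).natDegree ≠ 2 := by
    rintro h2
    exact Nat.not_even_iff_odd.2 hL (even_iff_two_dvd.2 (h2 ▸ hdvd))
  have h0 := minpoly.natDegree_pos (IsIntegral.of_finite F x)
  omega

lemma stabilizer_affinePoint_eq_center {x : L} (hx : 2 < (minpoly F x).natDegree) :
    MulAction.stabilizer (GL (Fin 2) F) (affinePoint L x) = Subgroup.center (GL (Fin 2) F) := by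
  refine le_antisymm (fun g hg => ?_) (fun g hg => ?_)
  · rw [MulAction.mem_stabilizer_iff, affinePoint, smul_mk_eq_mk_map_mulVec] at hg
    obtain ⟨c, hc⟩ := (mk_eq_mk_iff' _ _ _ _ _).1 hg
    set M := (g : Matrix (Fin 2) (Fin 2) F)
    have h0 := congrFun hc 0
    have h1 := congrFun hc 1
    simp only [Pi.smul_apply, smul_eq_mul, mulVec, dotProduct, Fin.sum_univ_two, map_apply,
      cons_val_zero, cons_val_one, mul_one] at h0 h1
    have hq : aeval x (C (M 1 0) * X ^ 2 + C (M 1 1 - M 0 0) * X + C (-M 0 1)) = 0 := by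
      simp only [map_add, map_mul, map_pow, map_neg, map_sub, aeval_C, aeval_X]
      linear_combination h0 - x * h1
    have hq0 := eq_zero_of_aeval_eq_zero_of_natDegree_lt (hx.trans_le' natDegree_quadratic_le) hq
    have e10 : M 1 0 = 0 := by simpa using congrArg (coeff · 2) hq0
    have e11 : M 1 1 = M 0 0 := by simpa [sub_eq_zero] using congrArg (coeff · 1) hq0
    have e01 : M 0 1 = 0 := by simpa using congrArg (coeff · 0) hq0
    rw [GeneralLinearGroup.mem_center_iff_val_mem_range_scalar]
    exact ⟨M 0 0, by ext i j; fin_cases i <;> fin_cases j <;> simp [M, e10, e11, e01]⟩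
  · obtain ⟨u, rfl⟩ := GeneralLinearGroup.center_eq_range_scalar.le hg
    exact scalar_smul u _

lemma card_center_GL {n R : Type*} [Fintype n] [DecidableEq n] [Nonempty n] [CommRing R] :
    Nat.card (Subgroup.center (GL n R)) = Nat.card Rˣ := by
  rw [GeneralLinearGroup.center_eq_range_scalar, ← SetLike.coe_sort_coe, MonoidHom.coe_range,
    Nat.card_range_of_injective]
  intro u v h
  have i := Classical.arbitrary n
  exact Units.ext (by simpa using congrArg (fun g : GL n R => g i i) h)

lemma card_orbit_affinePoint [Fintype F] {x : L} (hx : 2 < (minpoly F x).natDegree) :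
    Nat.card (MulAction.orbit (GL (Fin 2) F) (affinePoint L x)) =
      Fintype.card F * (Fintype.card F ^ 2 - 1) := by
  have h := Nat.card_congr
    (MulAction.orbitProdStabilizerEquivGroup (GL (Fin 2) F) (affinePoint L x))
  rw [Nat.card_prod, stabilizer_affinePoint_eq_center hx, card_center_GL, card_GL_field,
    Fin.prod_univ_two, Nat.card_units, Nat.card_eq_fintype_card (α := F)] at h
  have hq : 0 < Fintype.card F - 1 := by have := Fintype.one_lt_card (α := F); omega
  refine Nat.eq_of_mul_eq_mul_right hq (h.trans ?_)
  rw [Fin.val_zero, Fin.val_one, pow_zero, pow_one, sq (Fintype.card F), ← Nat.mul_sub_one]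
  ring

end ProjectiveLine

theorem orbit_count_complement_P1Fp_general (p f : ℕ) [Fact p.Prime] (hf1 : Odd f) :
    (∀ P : Projectivization (GaloisField p f) (Fin 2 → GaloisField p f),
      (¬ ∃ (a b : ZMod p)
          (h : (![algebraMap (ZMod p) (GaloisField p f) a,
                  algebraMap (ZMod p) (GaloisField p f) b] : Fin 2 → GaloisField p f) ≠ 0),
          P = Projectivization.mk (GaloisField p f) _ h) →
      Nat.card (MulAction.orbit (GL (Fin 2) (ZMod p)) P) = p * (p ^ 2 - 1)) ∧
    Nat.card {O : Set (Projectivization (GaloisField p f) (Fin 2 → GaloisField p f)) |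
        ∃ P : Projectivization (GaloisField p f) (Fin 2 → GaloisField p f),
          (¬ ∃ (a b : ZMod p)
              (h : (![algebraMap (ZMod p) (GaloisField p f) a,
                      algebraMap (ZMod p) (GaloisField p f) b] : Fin 2 → GaloisField p f) ≠ 0),
              P = Projectivization.mk (GaloisField p f) _ h) ∧
          O = MulAction.orbit (GL (Fin 2) (ZMod p)) P}
      * (p ^ 2 - 1) = p ^ (f - 1) - 1 := by
  have hf0 : f ≠ 0 := hf1.pos.ne'
  have card_orbit : ∀ P ∈ (rationalPoints (ZMod p) (GaloisField p f))ᶜ,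
      Nat.card (MulAction.orbit (GL (Fin 2) (ZMod p)) P) = p * (p ^ 2 - 1) := by
    intro P hP
    rw [compl_rationalPoints_eq_image] at hP
    obtain ⟨x, hx, rfl⟩ := hP
    have hdeg := two_lt_natDegree_minpoly (by rwa [GaloisField.finrank p hf0]) hx
    rw [card_orbit_affinePoint hdeg, ZMod.card]
  refine ⟨card_orbit, ?_⟩
  have h := card_orbitsIn_mul_eq_card (S := (rationalPoints (ZMod p) (GaloisField p f))ᶜ)
    (fun g P => (smul_mem_rationalPoints_iff g P).not.2) card_orbit
  rw [card_compl_rationalPoints, GaloisField.card p f hf0, Nat.card_zmod, ← mul_pow_sub_one hf0,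
    ← Nat.mul_sub_one, mul_left_comm] at h
  exact Nat.eq_of_mul_eq_mul_left (Fact.out : p.Prime).pos h

/-- Let `q = p^f` with `f` odd, `f > 1`.  Every `GL₂(𝔽_p)`-orbit on
`ℙ¹(𝔽_q) \ ℙ¹(𝔽_p)` has cardinality `p(p² − 1)`, and the number of such orbits is
`(p^(f−1) − 1)/(p² − 1)` (stated multiplicatively to avoid division). -/
theorem orbit_count_complement_P1Fp (p f : ℕ) [Fact p.Prime] (hf1 : Odd f) (hf2 : 1 < f) :
    (∀ P : Projectivization (GaloisField p f) (Fin 2 → GaloisField p f),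
      (¬ ∃ (a b : ZMod p)
          (h : (![algebraMap (ZMod p) (GaloisField p f) a,
                  algebraMap (ZMod p) (GaloisField p f) b] : Fin 2 → GaloisField p f) ≠ 0),
          P = Projectivization.mk (GaloisField p f) _ h) →
      Nat.card (MulAction.orbit (GL (Fin 2) (ZMod p)) P) = p * (p ^ 2 - 1)) ∧
    Nat.card {O : Set (Projectivization (GaloisField p f) (Fin 2 → GaloisField p f)) |
        ∃ P : Projectivization (GaloisField p f) (Fin 2 → GaloisField p f),
          (¬ ∃ (a b : ZMod p)
              (h : (![algebraMap (ZMod p) (GaloisField p f) a,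
                      algebraMap (ZMod p) (GaloisField p f) b] : Fin 2 → GaloisField p f) ≠ 0),
              P = Projectivization.mk (GaloisField p f) _ h) ∧
          O = MulAction.orbit (GL (Fin 2) (ZMod p)) P}
      * (p ^ 2 - 1) = p ^ (f - 1) - 1 :=
  orbit_count_complement_P1Fp_general p f hf1
end

section
/- Let p be an odd prime, q = p^f with f even, and ε ∈ 𝔽_{q²} \ 𝔽_q with ε² ∈ 𝔽_q. Then T_q ∩ GL₂(𝔽_p) = Z_p, where T_q = {(a b; bε² a) : a,b ∈ 𝔽_q not both zero} and Z_p is the group of scalar matrices over 𝔽_p. In particular, for f even the torus T_p of GL₂(𝔽_p) is not contained in T_q. -/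
/-!
Since `f` is even, `𝔽_q` contains `𝔽_{p²}`, hence a square root of every element of `𝔽_p`; on the
other hand `e = ε²` is a non-square of `𝔽_q`, as `ε ∉ 𝔽_q`. So `e ∉ 𝔽_p`, and a torus element
`(a b; e b a)` with entries in `𝔽_p` must have `b = 0`. The element `(0 1; t 0)` of `T_p` would
likewise force `e = t ∈ 𝔽_p`.
-/

open Polynomial

theorem not_isSquare_of_algebraMap_eq_sq {F L : Type*} [Field F] [Field L] [Algebra F L] {ε : L}
    (hε : ε ∉ Set.range (algebraMap F L)) {e : F} (he : algebraMap F L e = ε ^ 2) :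
    ¬ IsSquare e := by
  rintro ⟨c, rfl⟩
  rw [map_mul, sq, mul_self_eq_mul_self_iff] at he
  rcases he with h | h
  · exact hε ⟨c, h⟩
  · exact hε ⟨-c, by rw [map_neg, h, neg_neg]⟩

/-- Adjoining a missing square root gives a quadratic extension of `K`, which embeds into `F`. -/
theorem isSquare_algebraMap_of_two_dvd_finrank {K F : Type*} [Field K] [Field F] [Algebra K F]
    [Finite F] (h : 2 ∣ Module.finrank K F) (x : K) : IsSquare (algebraMap K F x) := by
  by_cases hx : IsSquare x
  · exact hx.map (algebraMap K F)
  have hirr : Irreducible (X ^ 2 - C x : K[X]) :=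
    X_pow_sub_C_irreducible_of_prime Nat.prime_two fun b hb => hx ⟨b, by rw [← hb, sq]⟩
  have := Fact.mk hirr
  have hdeg : Module.finrank K (AdjoinRoot (X ^ 2 - C x)) = 2 := by
    rw [(AdjoinRoot.powerBasis hirr.ne_zero).finrank, AdjoinRoot.powerBasis_dim,
      natDegree_X_pow_sub_C]
  obtain ⟨φ⟩ := FiniteField.nonempty_algHom_of_finrank_dvd (hdeg ▸ h : _ ∣ Module.finrank K F)
  refine ⟨φ (AdjoinRoot.root _), ?_⟩
  have hroot : AdjoinRoot.root (X ^ 2 - C x) ^ 2 = algebraMap K _ x := by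
    have := AdjoinRoot.eval₂_root (X ^ 2 - C x)
    rwa [eval₂_sub, eval₂_X_pow, eval₂_C, sub_eq_zero, ← AdjoinRoot.algebraMap_eq] at this
  rw [← sq, ← map_pow, hroot, φ.commutes]

theorem eq_zero_of_mem_range_of_eq_mul {K F : Type*} [Field K] [Field F] [Algebra K F] {e a b : F}
    (he : e ∉ Set.range (algebraMap K F)) (ha : a ∈ Set.range (algebraMap K F))
    (hb : b ∈ Set.range (algebraMap K F)) (hab : b = e * a) : a = 0 := by
  by_contra ha0
  rw [← RingHom.coe_fieldRange] at he ha hb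
  exact he (by simpa [hab, ha0] using div_mem hb ha)

theorem torus_inter_GL2p_eq_center_even_general (p f : ℕ) [Fact p.Prime] (hf : Even f)
    (F L : Type*) [Field F] [Field L] [Algebra (ZMod p) F] [Algebra F L]
    [Fintype F] (hF : Fintype.card F = p ^ f)
    (ε : L) (hε : ε ∉ Set.range (algebraMap F L)) (e : F) (he : algebraMap F L e = ε ^ 2)
    (η : GaloisField p 2) (hη : η ∉ Set.range (algebraMap (ZMod p) (GaloisField p 2)))
    (t : ZMod p) (ht : algebraMap (ZMod p) (GaloisField p 2) t = η ^ 2) :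
    (∀ g : GL (Fin 2) F,
      ((∀ i j, (g : Matrix (Fin 2) (Fin 2) F) i j ∈ Set.range (algebraMap (ZMod p) F)) ∧
        (g : Matrix (Fin 2) (Fin 2) F) 1 1 = (g : Matrix (Fin 2) (Fin 2) F) 0 0 ∧
        (g : Matrix (Fin 2) (Fin 2) F) 1 0 = e * (g : Matrix (Fin 2) (Fin 2) F) 0 1) ↔
      ((g : Matrix (Fin 2) (Fin 2) F) 0 1 = 0 ∧ (g : Matrix (Fin 2) (Fin 2) F) 1 0 = 0 ∧
        (g : Matrix (Fin 2) (Fin 2) F) 1 1 = (g : Matrix (Fin 2) (Fin 2) F) 0 0 ∧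
        (g : Matrix (Fin 2) (Fin 2) F) 0 0 ∈ Set.range (algebraMap (ZMod p) F))) ∧
    ¬ (∀ g : GL (Fin 2) F,
        ((∀ i j, (g : Matrix (Fin 2) (Fin 2) F) i j ∈ Set.range (algebraMap (ZMod p) F)) ∧
          (g : Matrix (Fin 2) (Fin 2) F) 1 1 = (g : Matrix (Fin 2) (Fin 2) F) 0 0 ∧
          (g : Matrix (Fin 2) (Fin 2) F) 1 0 =
            algebraMap (ZMod p) F t * (g : Matrix (Fin 2) (Fin 2) F) 0 1) →
        ((g : Matrix (Fin 2) (Fin 2) F) 1 1 = (g : Matrix (Fin 2) (Fin 2) F) 0 0 ∧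
          (g : Matrix (Fin 2) (Fin 2) F) 1 0 = e * (g : Matrix (Fin 2) (Fin 2) F) 0 1)) := by
  have hfinrank : Module.finrank (ZMod p) F = f :=
    Nat.pow_right_injective (Fact.out : p.Prime).two_le
      ((FiniteField.pow_finrank_eq_card p F).trans hF)
  have he_range : e ∉ Set.range (algebraMap (ZMod p) F) := by
    rintro ⟨x, rfl⟩
    exact not_isSquare_of_algebraMap_eq_sq hε he
      (isSquare_algebraMap_of_two_dvd_finrank (hfinrank ▸ hf.two_dvd) x)
  refine ⟨fun g => ⟨?_, ?_⟩, fun h => ?_⟩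
  · rintro ⟨hK, h11, h10⟩
    have h01 := eq_zero_of_mem_range_of_eq_mul he_range (hK 0 1) (hK 1 0) h10
    exact ⟨h01, by rw [h10, h01, mul_zero], h11, hK 0 0⟩
  · rintro ⟨h01, h10, h11, h00⟩
    refine ⟨fun i j => ?_, h11, by rw [h10, h01, mul_zero]⟩
    fin_cases i <;> fin_cases j <;> simp [h00, h01, h10, h11]
  · have ht0 : algebraMap (ZMod p) F t ≠ 0 := by
      rintro htF
      rw [(map_eq_zero_iff _ (algebraMap (ZMod p) F).injective).mp htF, map_zero] at ht
      exact hη ⟨0, by rw [map_zero, eq_comm, ← pow_eq_zero_iff two_ne_zero, ← ht]⟩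
    let g := Matrix.GeneralLinearGroup.mkOfDetNeZero !![0, 1; algebraMap (ZMod p) F t, 0]
      (by simpa using ht0)
    obtain ⟨-, h10⟩ := h g ⟨fun i j => by fin_cases i <;> fin_cases j <;> simp [g], by simp [g],
      by simp [g]⟩
    exact he_range ⟨t, by simpa [g] using h10⟩

/-- Let `p` be an odd prime, `q = p^f` with `f` even, and `ε ∈ 𝔽_{q²} \ 𝔽_q` with
`ε² ∈ 𝔽_q`, say `ε² = algebraMap e` with `e ∈ 𝔽_q = F`.  Then
`T_q ∩ GL₂(𝔽_p) = Z_p`: a matrix `g ∈ GL₂(𝔽_q)` has all entries in `𝔽_p` and lies in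
the anisotropic torus `T_q` (i.e. `g 1 1 = g 0 0` and `g 1 0 = e * g 0 1`) iff it is a
scalar matrix with entry in `𝔽_p`.  In particular, for `η ∈ 𝔽_{p²} \ 𝔽_p` with
`η² = algebraMap t`, `t ∈ 𝔽_p`, the torus `T_p` of `GL₂(𝔽_p)` is not contained in
`T_q`. -/
theorem torus_inter_GL2p_eq_center_even (p f : ℕ) [Fact p.Prime] (hp : Odd p) (hf : Even f)
    (hf0 : f ≠ 0) (F L : Type*) [Field F] [Field L] [Algebra (ZMod p) F] [Algebra F L]
    [Fintype F] [Fintype L] (hF : Fintype.card F = p ^ f) (hL : Fintype.card L = p ^ (2 * f))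
    (ε : L) (hε : ε ∉ Set.range (algebraMap F L)) (e : F) (he : algebraMap F L e = ε ^ 2)
    (η : GaloisField p 2) (hη : η ∉ Set.range (algebraMap (ZMod p) (GaloisField p 2)))
    (t : ZMod p) (ht : algebraMap (ZMod p) (GaloisField p 2) t = η ^ 2) :
    (∀ g : GL (Fin 2) F,
      ((∀ i j, (g : Matrix (Fin 2) (Fin 2) F) i j ∈ Set.range (algebraMap (ZMod p) F)) ∧
        (g : Matrix (Fin 2) (Fin 2) F) 1 1 = (g : Matrix (Fin 2) (Fin 2) F) 0 0 ∧
        (g : Matrix (Fin 2) (Fin 2) F) 1 0 = e * (g : Matrix (Fin 2) (Fin 2) F) 0 1) ↔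
      ((g : Matrix (Fin 2) (Fin 2) F) 0 1 = 0 ∧ (g : Matrix (Fin 2) (Fin 2) F) 1 0 = 0 ∧
        (g : Matrix (Fin 2) (Fin 2) F) 1 1 = (g : Matrix (Fin 2) (Fin 2) F) 0 0 ∧
        (g : Matrix (Fin 2) (Fin 2) F) 0 0 ∈ Set.range (algebraMap (ZMod p) F))) ∧
    ¬ (∀ g : GL (Fin 2) F,
        ((∀ i j, (g : Matrix (Fin 2) (Fin 2) F) i j ∈ Set.range (algebraMap (ZMod p) F)) ∧
          (g : Matrix (Fin 2) (Fin 2) F) 1 1 = (g : Matrix (Fin 2) (Fin 2) F) 0 0 ∧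
          (g : Matrix (Fin 2) (Fin 2) F) 1 0 =
            algebraMap (ZMod p) F t * (g : Matrix (Fin 2) (Fin 2) F) 0 1) →
        ((g : Matrix (Fin 2) (Fin 2) F) 1 1 = (g : Matrix (Fin 2) (Fin 2) F) 0 0 ∧
          (g : Matrix (Fin 2) (Fin 2) F) 1 0 = e * (g : Matrix (Fin 2) (Fin 2) F) 0 1)) :=
  torus_inter_GL2p_eq_center_even_general p f hf F L hF ε hε e he η hη t ht
end
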